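/- For a ∉ {0,-1,-2,...}, z ≠ 0, |z| < 1, |t| < |z|, setting ν = η, δ = ξ, δ' = ξ' gives Φ(z,t,s,a) = ∑_{k=0}^∞ (μ)_k z^k / ((a+k)^s k!) · ₂F₁(η', -k; 1-η-k; t/z), where Φ(z,t,s,a) = ∑_{k,l≥0} (μ)_{k+l}(η)_k(η')_l / ((η)_{k+l} k! l!) · z^k t^l/(k+l+a)^s. -/

import Mathlib

/-!
Grouping the absolutely convergent double series along the diagonals `k + l = m` produces the
`m`-th term on the right: `(η)_m = (η)_k (η + k)_l`, `(-m)_l k! = (-1)^l m!` and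
`(1 - η - m)_l = (-1)^l (η + k)_l` turn the diagonal sum into the terminating `₂F₁` at `t / z`.
For absolute convergence, `|(a + m)^(-s)| ≤ e^(π |Im s|) |a + m|^(-Re s)`, and
`|(μ)_m / (η)_m| |a + m|^(-Re s)` has consecutive ratios tending to `1`, so it is `O(r^(-m))` for
every `r < 1`; meanwhile `∑ (η)_k w^k / k!` converges for `|w| < 1` by the ratio test.
-/

open Complex

noncomputable def pch (x : ℂ) (n : ℕ) : ℂ := (ascPochhammer ℂ n).eval x

/-- The Gauss hypergeometric function ₂F₁ (as a series). -/
noncomputable def hyp2F1 (a b c w : ℂ) : ℂ :=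
  ∑' n : ℕ, (pch a n * pch b n) / (pch c n * (n.factorial : ℂ)) * w ^ n

open Filter Finset Topology

lemma pch_succ (x : ℂ) (n : ℕ) : pch x (n + 1) = pch x n * (x + n) :=
  ascPochhammer_succ_eval n x

lemma pch_add (x : ℂ) (n m : ℕ) : pch x (n + m) = pch x n * pch (x + n) m := by
  simp [pch, ← ascPochhammer_mul, Polynomial.eval_comp]

lemma pch_ne_zero {x : ℂ} (hx : ∀ n : ℕ, x ≠ -n) (n : ℕ) : pch x n ≠ 0 := by
  simp only [pch, ne_eq, ascPochhammer_eval_eq_zero_iff, not_exists, not_and]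
  exact fun k _ h => hx k (by rw [h, neg_neg])

lemma pch_neg_natCast_of_lt {k n : ℕ} (h : k < n) : pch (-k) n = 0 :=
  ascPochhammer_eval_neg_coe_nat_of_lt h

lemma pch_neg_natCast_mul_factorial (k l : ℕ) :
    pch (-((k + l : ℕ) : ℂ)) l * k.factorial = (-1) ^ l * (k + l).factorial := by
  rw [pch, ascPochhammer_eval_neg_eq_descPochhammer, descPochhammer_eval_eq_descFactorial,
    ← Nat.factorial_mul_descFactorial (Nat.le_add_left l k), Nat.add_sub_cancel]
  push_cast
  ring

lemma pch_one_sub_sub (x : ℂ) (l : ℕ) : pch (1 - x - l) l = (-1) ^ l * pch x l := by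
  rw [pch, show 1 - x - l = -(x + l - 1) by ring, ascPochhammer_eval_neg_eq_descPochhammer,
    descPochhammer_eval_eq_ascPochhammer, pch]
  congr 2
  ring

lemma tendsto_norm_add_natCast_div_norm_add_natCast (x y : ℂ) :
    Tendsto (fun m : ℕ => ‖x + m‖ / ‖y + m‖) atTop (𝓝 1) := by
  have h := ((tendsto_const_div_atTop_nhds_zero_nat x).add_const 1).div
    ((tendsto_const_div_atTop_nhds_zero_nat y).add_const 1) (by norm_num)
  rw [zero_add, div_one] at h
  have h' : Tendsto (fun m : ℕ => ‖(x / m + 1) / (y / m + 1)‖) atTop (𝓝 1) := by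
    simpa using h.norm
  refine h'.congr' ?_
  filter_upwards [eventually_ne_atTop 0] with m hm
  have hm : (m : ℂ) ≠ 0 := Nat.cast_ne_zero.2 hm
  rw [← norm_div]
  congr 1
  field_simp

lemma summable_of_norm_succ_le_mul {α : Type*} [SeminormedAddCommGroup α] [CompleteSpace α]
    {f : ℕ → α} {q : ℕ → ℝ} {r : ℝ} (hq : Tendsto q atTop (𝓝 r)) (hr : r < 1)
    (hf : ∀ m, ‖f (m + 1)‖ ≤ q m * ‖f m‖) : Summable f := by
  refine summable_of_ratio_norm_eventually_le (r := (r + 1) / 2) (by linarith) ?_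
  filter_upwards [hq.eventually_le_const (show r < (r + 1) / 2 by linarith)] with m hm
  exact (hf m).trans (mul_le_mul_of_nonneg_right hm (norm_nonneg _))

lemma summable_pch_div_factorial_mul_pow (x : ℂ) {y : ℂ} (hy : ‖y‖ < 1) :
    Summable fun k : ℕ => pch x k / k.factorial * y ^ k := by
  have hq := (tendsto_norm_add_natCast_div_norm_add_natCast x 1).mul_const ‖y‖
  rw [one_mul] at hq
  refine summable_of_norm_succ_le_mul hq hy fun k => le_of_eq ?_
  rw [pch_succ, Nat.factorial_succ, pow_succ]
  push_cast
  simp only [norm_mul, norm_div, norm_pow]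
  rw [add_comm (1 : ℂ)]
  field_simp

lemma inv_norm_cpow_le {x : ℂ} (hx : x ≠ 0) (s : ℂ) :
    ‖x ^ s‖⁻¹ ≤ Real.exp (Real.pi * |s.im|) * ‖x‖ ^ (-s.re) := by
  rw [norm_cpow_of_ne_zero hx, inv_div, Real.rpow_neg (norm_nonneg x), div_eq_mul_inv]
  gcongr ?_ * _
  refine Real.exp_le_exp.2 ?_
  calc arg x * s.im ≤ |arg x * s.im| := le_abs_self _
    _ = |arg x| * |s.im| := abs_mul _ _
    _ ≤ Real.pi * |s.im| := by gcongr; exact abs_arg_le_pi x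

lemma summable_norm_pch_div_pch_mul_rpow_mul_pow (μ : ℂ) {η a : ℂ} (hη : ∀ n : ℕ, η ≠ -n)
    (ha : ∀ n : ℕ, a ≠ -n) (σ : ℝ) {r : ℝ} (hr0 : 0 ≤ r) (hr : r < 1) :
    Summable fun m : ℕ => ‖pch μ m / pch η m‖ * ‖a + m‖ ^ σ * r ^ m := by
  have hq := ((tendsto_norm_add_natCast_div_norm_add_natCast μ η).mul
    ((tendsto_norm_add_natCast_div_norm_add_natCast (a + 1) a).rpow_const (p := σ)
      (Or.inl one_ne_zero))).mul_const r
  rw [Real.one_rpow, one_mul, one_mul] at hq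
  refine summable_of_norm_succ_le_mul hq hr fun m => le_of_eq ?_
  have hηm : η + m ≠ 0 := fun h => hη m (eq_neg_of_add_eq_zero_left h)
  have ham : ‖a + m‖ ≠ 0 := norm_ne_zero_iff.2 fun h => ha m (eq_neg_of_add_eq_zero_left h)
  rw [pch_succ, pch_succ, pow_succ, Real.div_rpow (norm_nonneg _) (norm_nonneg _)]
  push_cast
  simp only [norm_mul, norm_div, norm_pow, Real.norm_eq_abs, abs_norm, abs_of_nonneg hr0,
    abs_of_nonneg (Real.rpow_nonneg (norm_nonneg _) σ), ← add_assoc, add_right_comm a (m : ℂ) 1]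
  field_simp

theorem Summable.tsum_eq_tsum_sum_antidiagonal {α A : Type*} [AddCommMonoid α]
    [TopologicalSpace α] [ContinuousAdd α] [T3Space α] [AddCommMonoid A] [HasAntidiagonal A]
    {f : A × A → α} (hf : Summable f) : ∑' p, f p = ∑' n, ∑ p ∈ antidiagonal n, f p := by
  conv_rhs => congr; ext; rw [← Finset.sum_finset_coe, ← tsum_fintype (L := .unconditional _)]
  rw [← HasAntidiagonal.sigmaAntidiagonalEquivProd.tsum_eq f]
  exact (HasAntidiagonal.sigmaAntidiagonalEquivProd.summable_iff.2 hf).tsum_sigma'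
    fun n => (hasSum_fintype _).summable

lemma hyp2F1_neg_natCast (b c w : ℂ) (m : ℕ) :
    hyp2F1 b (-m) c w =
      ∑ l ∈ range (m + 1), pch b l * pch (-m) l / (pch c l * l.factorial) * w ^ l :=
  tsum_eq_sum fun l hl => by
    rw [pch_neg_natCast_of_lt (by simpa using hl), mul_zero, zero_div, zero_mul]

noncomputable def phiTerm (μ η η' z t s a : ℂ) (p : ℕ × ℕ) : ℂ :=
  (pch μ (p.1 + p.2) * pch η p.1 * pch η' p.2) /
      (pch η (p.1 + p.2) * (p.1.factorial : ℂ) * (p.2.factorial : ℂ)) *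
    (z ^ p.1 * t ^ p.2 / ((p.1 : ℂ) + (p.2 : ℂ) + a) ^ s)

section phiTerm

variable {μ η η' z t s a : ℂ}

lemma phiTerm_eq_mul (hη : ∀ n : ℕ, η ≠ -n) (ha : ∀ n : ℕ, a ≠ -n) (hz : z ≠ 0) (k l : ℕ) :
    phiTerm μ η η' z t s a (k, l) =
      pch μ (k + l) * z ^ (k + l) / ((a + (k + l : ℕ)) ^ s * (k + l).factorial) *
        (pch η' l * pch (-(k + l : ℕ)) l / (pch (1 - η - (k + l : ℕ)) l * l.factorial) *
          (t / z) ^ l) := by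
  have hηk : ∀ n : ℕ, η + k ≠ -n := fun n h => hη (k + n) (by push_cast; linear_combination h)
  have hs : (a + (k + l : ℕ)) ^ s ≠ 0 := by
    rw [Ne, cpow_eq_zero_iff, not_and_or]
    exact Or.inl fun h => ha (k + l) (eq_neg_of_add_eq_zero_left h)
  rw [phiTerm, eq_div_of_mul_eq (Nat.cast_ne_zero.2 k.factorial_ne_zero)
      (pch_neg_natCast_mul_factorial k l),
    show 1 - η - (k + l : ℕ) = 1 - (η + k) - l by push_cast; ring, pch_one_sub_sub, pch_add η,
    show (k : ℂ) + l + a = a + (k + l : ℕ) by push_cast; ring]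
  have := pch_ne_zero hη k
  have := pch_ne_zero hηk l
  have : ((k + l).factorial : ℂ) ≠ 0 := Nat.cast_ne_zero.2 (k + l).factorial_ne_zero
  rw [div_pow, pow_add]
  field_simp

lemma norm_phiTerm_le (ha : ∀ n : ℕ, a ≠ -n) (k l : ℕ) :
    ‖phiTerm μ η η' z t s a (k, l)‖ ≤
      Real.exp (Real.pi * |s.im|) *
          (‖pch μ (k + l) / pch η (k + l)‖ * ‖a + (k + l : ℕ)‖ ^ (-s.re)) *
        ‖pch η k / k.factorial * z ^ k‖ * ‖pch η' l / l.factorial * t ^ l‖ := by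
  have hx : a + (k + l : ℕ) ≠ 0 := fun h => ha (k + l) (eq_neg_of_add_eq_zero_left h)
  have h := inv_norm_cpow_le hx s
  calc ‖phiTerm μ η η' z t s a (k, l)‖
      = ‖pch μ (k + l) / pch η (k + l)‖ * ‖pch η k / k.factorial * z ^ k‖ *
          ‖pch η' l / l.factorial * t ^ l‖ * ‖(a + (k + l : ℕ)) ^ s‖⁻¹ := by
        rw [← norm_inv, ← norm_mul, ← norm_mul, ← norm_mul]
        simp only [phiTerm]
        rw [show (k : ℂ) + l + a = a + (k + l : ℕ) by push_cast; ring]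
        congr 1
        ring
    _ ≤ _ := by
        grw [h]
        exact le_of_eq (by ring)

lemma summable_phiTerm (hη : ∀ n : ℕ, η ≠ -n) (ha : ∀ n : ℕ, a ≠ -n) (hz : ‖z‖ < 1)
    (ht : ‖t‖ < 1) : Summable (phiTerm μ η η' z t s a) := by
  obtain ⟨r, hzr, htr, hr1⟩ : ∃ r, ‖z‖ < r ∧ ‖t‖ < r ∧ r < 1 :=
    ⟨(max ‖z‖ ‖t‖ + 1) / 2, by grind, by grind, by grind⟩
  have hr0 : 0 < r := (norm_nonneg z).trans_lt hzr
  have hW := summable_norm_pch_div_pch_mul_rpow_mul_pow μ hη ha (-s.re) hr0.le hr1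
  have hU := summable_pch_div_factorial_mul_pow η (y := z / r)
    (by rwa [norm_div, Complex.norm_of_nonneg hr0.le, div_lt_one hr0])
  have hV := summable_pch_div_factorial_mul_pow η' (y := t / r)
    (by rwa [norm_div, Complex.norm_of_nonneg hr0.le, div_lt_one hr0])
  set C := ∑' m : ℕ, ‖pch μ m / pch η m‖ * ‖a + m‖ ^ (-s.re) * r ^ m
  refine .of_norm_bounded ((hU.norm.mul_of_nonneg hV.norm (fun _ => norm_nonneg _)
    (fun _ => norm_nonneg _)).mul_left (Real.exp (Real.pi * |s.im|) * C)) ?_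
  rintro ⟨k, l⟩
  calc ‖phiTerm μ η η' z t s a (k, l)‖
      ≤ _ := norm_phiTerm_le ha k l
    _ = Real.exp (Real.pi * |s.im|) *
          (‖pch μ (k + l) / pch η (k + l)‖ * ‖a + (k + l : ℕ)‖ ^ (-s.re) * r ^ (k + l)) *
          (‖pch η k / k.factorial * (z / r) ^ k‖ * ‖pch η' l / l.factorial * (t / r) ^ l‖) := by
        simp only [norm_mul, norm_div, norm_pow, Complex.norm_of_nonneg hr0.le, div_pow, pow_add]
        field_simp
    _ ≤ _ := by
        gcongr
        exact hW.le_tsum (k + l) fun j _ => by positivity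

lemma sum_antidiagonal_phiTerm (hη : ∀ n : ℕ, η ≠ -n) (ha : ∀ n : ℕ, a ≠ -n) (hz : z ≠ 0)
    (m : ℕ) :
    ∑ p ∈ antidiagonal m, phiTerm μ η η' z t s a p =
      pch μ m * z ^ m / ((a + m) ^ s * m.factorial) * hyp2F1 η' (-m) (1 - η - m) (t / z) := by
  rw [hyp2F1_neg_natCast, mul_sum, Nat.antidiagonal_eq_map', sum_map]
  refine sum_congr rfl fun l hl => ?_
  obtain ⟨k, rfl⟩ : ∃ k, m = k + l := ⟨m - l, by grind⟩
  change phiTerm μ η η' z t s a (k + l - l, l) = _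
  rw [show k + l - l = k from Nat.add_sub_cancel k l]
  exact phiTerm_eq_mul hη ha hz k l

end phiTerm

theorem Phi_series_2F1_general (μ η η' z t s a : ℂ)
    (ha : ∀ n : ℕ, a ≠ -(n : ℂ))
    (hη0 : ∀ n : ℕ, η ≠ -(n : ℂ))
    (hz0 : z ≠ 0) (hz : ‖z‖ < 1) (ht : ‖t‖ < ‖z‖) :
    (∑' p : ℕ × ℕ,
        (pch μ (p.1 + p.2) * pch η p.1 * pch η' p.2) /
            (pch η (p.1 + p.2) * (p.1.factorial : ℂ) * (p.2.factorial : ℂ)) *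
          (z ^ p.1 * t ^ p.2 / ((p.1 : ℂ) + (p.2 : ℂ) + a) ^ s)) =
      ∑' k : ℕ,
        pch μ k * z ^ k / ((a + k) ^ s * (k.factorial : ℂ)) *
          hyp2F1 η' (-(k : ℂ)) (1 - η - k) (t / z) :=
  (summable_phiTerm hη0 ha hz (ht.trans hz)).tsum_eq_tsum_sum_antidiagonal.trans
    (tsum_congr (sum_antidiagonal_phiTerm hη0 ha hz0))

theorem Phi_series_2F1 (μ η η' z t s a : ℂ)
    (ha : ∀ n : ℕ, a ≠ -(n : ℂ)) (hη : ∀ n : ℕ, 0 < n → η ≠ (n : ℂ))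
    (hη0 : ∀ n : ℕ, η ≠ -(n : ℂ))
    (hz0 : z ≠ 0) (hz : ‖z‖ < 1) (ht : ‖t‖ < ‖z‖) :
    (∑' p : ℕ × ℕ,
        (pch μ (p.1 + p.2) * pch η p.1 * pch η' p.2) /
            (pch η (p.1 + p.2) * (p.1.factorial : ℂ) * (p.2.factorial : ℂ)) *
          (z ^ p.1 * t ^ p.2 / ((p.1 : ℂ) + (p.2 : ℂ) + a) ^ s)) =
      ∑' k : ℕ,
        pch μ k * z ^ k / ((a + k) ^ s * (k.factorial : ℂ)) *
          hyp2F1 η' (-(k : ℂ)) (1 - η - k) (t / z) :=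
  Phi_series_2F1_general μ η η' z t s a ha hη0 hz0 hz ht
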